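/- arXiv:1303.1757 — 2 statements merged into one kernel-verified Lean document; each statement's English description precedes it below -/
import Mathlib

section
/- Pfaff–Saalschütz identity: for a nonnegative integer m and complex numbers a, b, c with c and 1-m+a+b-c not nonpositive integers exceeding -m in absolute value (so denominators are nonzero), the sum over k from 0 to m of (-m)_k (a)_k (b)_k / (k! (c)_k (1-m+a+b-c)_k) equals (c-a)_m (c-b)_m / ((c)_m (c-a-b)_m). -/
noncomputable def rf (a : ℂ) (k : ℕ) : ℂ := (ascPochhammer ℂ k).eval a

lemma rf_zero (a : ℂ) : rf a 0 = 1 := by simp [rf]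

lemma rf_one (a : ℂ) : rf a 1 = a := by simp [rf]

lemma rf_succ (a : ℂ) (k : ℕ) : rf a (k+1) = rf a k * (a + k) := by
  simp [rf, ascPochhammer_succ_right]

lemma rf_succ' (a : ℂ) (k : ℕ) : rf a (k+1) = a * rf (a+1) k := by
  simp [rf, ascPochhammer_succ_left, Polynomial.eval_comp]

lemma rf_neg_nat (m : ℕ) : ∀ k ≤ m, rf (-(m:ℂ)) k = (-1)^k * (k.factorial : ℂ) * (m.choose k : ℂ) := by
  intro k hk
  induction k with
  | zero => simp [rf_zero]
  | succ k ih =>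
    have hk' : k ≤ m := by omega
    have h1 : (Nat.choose m (k+1)) * (k+1) = (Nat.choose m k) * (m - k) := Nat.choose_succ_right_eq m k
    have h2 : ((m - k : ℕ) : ℂ) = (m : ℂ) - k := by
      push_cast [Nat.cast_sub hk'] ; ring
    have h1' : ((Nat.choose m (k+1) : ℕ) : ℂ) * (k+1) = (Nat.choose m k : ℂ) * ((m:ℂ) - k) := by
      rw [← h2] ; exact_mod_cast congrArg (Nat.cast : ℕ → ℂ) h1
    rw [rf_succ, ih hk']
    have hf : ((k+1).factorial : ℂ) = (k.factorial : ℂ) * (k+1) := by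
      push_cast [Nat.factorial_succ] ; ring
    rw [hf]
    linear_combination ((-1:ℂ)^k * (k.factorial : ℂ)) * h1'

lemma rf_reflect (x : ℂ) : ∀ m : ℕ, rf x m = (-1)^m * rf (-x - m + 1) m := by
  intro m
  induction m generalizing x with
  | zero => simp [rf_zero]
  | succ m ih =>
    rw [rf_succ, ih x]
    have h1 : rf (-x - (m+1:ℕ) + 1) (m+1) = (-x - (m+1:ℕ) + 1) * rf (-x - m + 1) m := by
      rw [rf_succ']
      congr 1
      · congr 1
        push_cast ; ring
    rw [h1]
    push_cast
    ring

/-- telescoping certificate -/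
noncomputable def gg (a b c : ℂ) (m : ℕ) : ℕ → ℂ
  | 0 => 0
  | (j+1) => (-1)^j * (m.choose j : ℂ) * rf a (j+1) * rf b (j+1) * rf (c + j) (m - j)
      * rf (1 - (m:ℂ) + a + b - c + j) (m - j)

lemma step_eq (a b c : ℂ) (m : ℕ) : ∀ k ≤ m + 1,
    (-1:ℂ)^k * ((m+1).choose k : ℂ) * rf a k * rf b k * rf (c + k) (m + 1 - k)
      * rf (1 - ((m:ℂ)+1) + a + b - c + k) (m + 1 - k)
    = gg a b c m (k+1) - gg a b c m k
      - (c - a + m) * (c - b + m) *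
        ((-1:ℂ)^k * (m.choose k : ℂ) * rf a k * rf b k * rf (c + k) (m - k)
          * rf (1 - (m:ℂ) + a + b - c + k) (m - k)) := by
  intro k hk
  rcases k with _ | j
  · -- k = 0
    simp only [gg, Nat.cast_zero, add_zero, Nat.choose_zero_right, Nat.cast_one, pow_zero,
      one_mul, rf_zero, mul_one, Nat.sub_zero, Nat.cast_ofNat, Nat.add_sub_cancel]
    have h1 : rf c (m+1) = rf c m * (c + m) := rf_succ c m
    have h2 : rf (1 - ((m:ℂ)+1) + a + b - c) (m+1)
        = (1 - ((m:ℂ)+1) + a + b - c) * rf (1 - (m:ℂ) + a + b - c) m := by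
      have h := rf_succ' (1 - ((m:ℂ)+1) + a + b - c) m
      have harg : (1 - ((m:ℂ)+1) + a + b - c) + 1 = 1 - (m:ℂ) + a + b - c := by ring
      rwa [harg] at h
    rw [h1, h2, rf_one, rf_one]
    ring
  · by_cases hjm : j + 1 ≤ m
    · -- middle case
      obtain ⟨n, hn⟩ : ∃ n, m - (j+1) = n := ⟨m - (j+1), rfl⟩
      have e1 : m + 1 - (j + 1) = n + 1 := by omega
      have e2 : m - j = n + 1 := by omega
      have hmn : (m : ℂ) = (j:ℂ) + 1 + n := by
        have : m = j + 1 + n := by omega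
        exact_mod_cast congrArg (Nat.cast : ℕ → ℂ) this
      simp only [gg, e1, e2, hn]
      -- expand all the (n+1)- and (j+2)-indexed rf's
      rw [rf_succ a (j+1), rf_succ b (j+1)]
      rw [rf_succ (c + ((j:ℕ)+1:ℕ)) n]
      have h3 : rf (1 - ((m:ℂ)+1) + a + b - c + ((j:ℕ)+1:ℕ)) (n+1)
          = (1 - ((m:ℂ)+1) + a + b - c + ((j:ℕ)+1:ℕ))
            * rf (1 - (m:ℂ) + a + b - c + ((j:ℕ)+1:ℕ)) n := by
        have h := rf_succ' (1 - ((m:ℂ)+1) + a + b - c + ((j:ℕ)+1:ℕ)) n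
        have harg : (1 - ((m:ℂ)+1) + a + b - c + ((j:ℕ)+1:ℕ)) + 1
            = 1 - (m:ℂ) + a + b - c + ((j:ℕ)+1:ℕ) := by push_cast; ring
        rwa [harg] at h
      rw [h3]
      have h4 : rf (c + (j:ℕ)) (n+1) = (c + (j:ℕ)) * rf (c + ((j:ℕ)+1:ℕ)) n := by
        have h := rf_succ' (c + (j:ℕ)) n
        have harg : (c + ((j:ℕ):ℂ)) + 1 = c + ((j:ℕ)+1:ℕ) := by push_cast; ring
        rwa [harg] at h
      rw [h4]
      have h5 : rf (1 - (m:ℂ) + a + b - c + (j:ℕ)) (n+1)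
          = (1 - (m:ℂ) + a + b - c + (j:ℕ)) * rf (1 - (m:ℂ) + a + b - c + ((j:ℕ)+1:ℕ)) n := by
        have h := rf_succ' (1 - (m:ℂ) + a + b - c + (j:ℕ)) n
        have harg : (1 - (m:ℂ) + a + b - c + ((j:ℕ):ℂ)) + 1
            = 1 - (m:ℂ) + a + b - c + ((j:ℕ)+1:ℕ) := by push_cast; ring
        rwa [harg] at h
      rw [h5]
      have hpascal : (((m+1).choose (j+1) : ℕ) : ℂ)
          = ((m.choose j : ℕ) : ℂ) + ((m.choose (j+1) : ℕ) : ℂ) := by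
        rw [Nat.choose_succ_succ]; push_cast; ring
      have hx : ((m.choose (j+1) : ℕ) : ℂ) * ((j:ℂ)+1) = ((m.choose j : ℕ) : ℂ) * ((n:ℂ)+1) := by
        have h := Nat.choose_succ_right_eq m j
        have h2 : ((m.choose (j+1) : ℕ) : ℂ) * ((j:ℂ)+1) = ((m.choose j : ℕ) : ℂ) * ((m - j : ℕ) : ℂ) := by
          exact_mod_cast congrArg (Nat.cast : ℕ → ℂ) h
        rw [h2, e2]; push_cast; ring
      rw [hpascal]
      have hj1 : ((j:ℂ)+1) ≠ 0 := by
        have : (0:ℝ) < (j:ℝ) + 1 := by positivity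
        intro hcon
        exact absurd (by exact_mod_cast hcon : ((j:ℝ)+1) = 0) (ne_of_gt this)
      apply mul_left_cancel₀ hj1
      rw [hmn]
      push_cast
      linear_combination ((-1:ℂ)^(j+1) * rf a (j+1) * rf b (j+1) * rf (c+((j:ℂ)+1)) n
        * rf (1 - ((j:ℂ)+1+n) + a + b - c + ((j:ℂ)+1)) n
        * ((c+((j:ℂ)+1+n))*((1 - ((j:ℂ)+1+n) + a + b - c)+j)
          - (a+j+1)*(b+j+1)
          + (c-a+((j:ℂ)+1+n))*(c-b+((j:ℂ)+1+n)))) * hx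
    · -- k = m+1
      have hj : j = m := by omega
      subst hj
      simp only [gg, Nat.sub_self, Nat.add_sub_cancel, rf_zero, mul_one,
        Nat.choose_self, Nat.choose_succ_self, Nat.cast_one, Nat.cast_zero]
      ring

lemma key (a b c : ℂ) : ∀ m : ℕ,
    ∑ k ∈ Finset.range (m+1),
      ((-1:ℂ)^k * (m.choose k : ℂ) * rf a k * rf b k * rf (c + k) (m - k)
        * rf (1 - (m:ℂ) + a + b - c + k) (m - k))
    = (-1)^m * rf (c-a) m * rf (c-b) m := by
  intro m
  induction m with
  | zero => simp [rf_zero]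
  | succ m ih =>
    have hcast : (1 - ((m+1:ℕ):ℂ) + a + b - c) = 1 - ((m:ℂ)+1) + a + b - c := by push_cast; ring
    have hstep : ∀ k ∈ Finset.range (m+2),
        ((-1:ℂ)^k * ((m+1).choose k : ℂ) * rf a k * rf b k * rf (c + k) (m + 1 - k)
          * rf (1 - ((m+1:ℕ):ℂ) + a + b - c + k) (m + 1 - k))
        = (gg a b c m (k+1) - gg a b c m k)
          - (c - a + m) * (c - b + m) *
            ((-1:ℂ)^k * (m.choose k : ℂ) * rf a k * rf b k * rf (c + k) (m - k)
              * rf (1 - (m:ℂ) + a + b - c + k) (m - k)) := by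
      intro k hkmem
      have hk : k ≤ m + 1 := by
        have := Finset.mem_range.mp hkmem; omega
      rw [hcast]
      exact step_eq a b c m k hk
    rw [Finset.sum_congr rfl hstep, Finset.sum_sub_distrib, Finset.sum_range_sub (gg a b c m),
      ← Finset.mul_sum, Finset.sum_range_succ]
    have hz1 : gg a b c m (m+2) = 0 := by
      simp [gg, Nat.choose_succ_self]
    have hz2 : gg a b c m 0 = 0 := rfl
    have hz3 : ((-1:ℂ)^(m+1) * (m.choose (m+1) : ℂ) * rf a (m+1) * rf b (m+1)
        * rf (c + ((m+1:ℕ):ℂ)) (m - (m+1)) * rf (1 - (m:ℂ) + a + b - c + ((m+1:ℕ):ℂ)) (m - (m+1))) = 0 := by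
      simp [Nat.choose_succ_self]
    rw [hz1, hz2, hz3, add_zero, ih]
    rw [rf_succ (c-a) m, rf_succ (c-b) m]
    ring

lemma rf_add (x : ℂ) (j : ℕ) : ∀ l : ℕ, rf x (j + l) = rf x j * rf (x + j) l := by
  intro l
  induction l with
  | zero => simp [rf_zero]
  | succ l ih =>
    rw [show j + (l+1) = (j+l)+1 from rfl, rf_succ, ih, rf_succ]
    push_cast
    ring

theorem pfaff_saalschutz (m : ℕ) (a b c : ℂ)
    (hc : ∀ k ≤ m, rf c k ≠ 0)
    (hd : ∀ k ≤ m, rf (1 - (m : ℂ) + a + b - c) k ≠ 0)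
    (hm : rf c m * rf (c - a - b) m ≠ 0) :
    ∑ k ∈ Finset.range (m + 1),
        rf (-(m : ℂ)) k * rf a k * rf b k /
          ((k.factorial : ℂ) * rf c k * rf (1 - (m : ℂ) + a + b - c) k)
      = rf (c - a) m * rf (c - b) m / (rf c m * rf (c - a - b) m) := by
  set D := 1 - (m : ℂ) + a + b - c with hDdef
  have hD : rf D m = (-1)^m * rf (c - a - b) m := by
    have h := rf_reflect D m
    have harg : -D - (m:ℂ) + 1 = c - a - b := by rw [hDdef]; ring
    rwa [harg] at h
  have hcm : rf c m ≠ 0 := fun h => hm (by rw [h, zero_mul])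
  have hcab : rf (c - a - b) m ≠ 0 := fun h => hm (by rw [h, mul_zero])
  have hneg : ((-1:ℂ)^m) ≠ 0 := pow_ne_zero m (by norm_num)
  have hDm : rf D m ≠ 0 := by rw [hD]; exact mul_ne_zero hneg hcab
  have hterm : ∀ k ∈ Finset.range (m+1),
      rf (-(m : ℂ)) k * rf a k * rf b k /
          ((k.factorial : ℂ) * rf c k * rf D k)
      = ((-1:ℂ)^k * (m.choose k : ℂ) * rf a k * rf b k * rf (c + k) (m - k)
          * rf (D + k) (m - k)) / (rf c m * rf D m) := by
    intro k hkmem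
    have hk : k ≤ m := by have := Finset.mem_range.mp hkmem; omega
    have hden : ((k.factorial : ℂ) * rf c k * rf D k) ≠ 0 :=
      mul_ne_zero (mul_ne_zero (by exact_mod_cast Nat.factorial_ne_zero k) (hc k hk)) (hd k hk)
    rw [div_eq_div_iff hden (mul_ne_zero hcm hDm)]
    have hsplit : k + (m - k) = m := by omega
    have hc2 : rf c m = rf c k * rf (c + k) (m - k) := by
      conv_lhs => rw [← hsplit]
      exact rf_add c k (m - k)
    have hd2 : rf D m = rf D k * rf (D + k) (m - k) := by
      conv_lhs => rw [← hsplit]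
      exact rf_add D k (m - k)
    rw [rf_neg_nat m k hk, hc2, hd2]
    ring
  rw [Finset.sum_congr rfl hterm, ← Finset.sum_div]
  have hk2 : ∑ k ∈ Finset.range (m+1),
      ((-1:ℂ)^k * (m.choose k : ℂ) * rf a k * rf b k * rf (c + k) (m - k)
        * rf (D + k) (m - k)) = (-1)^m * rf (c-a) m * rf (c-b) m := key a b c m
  rw [hk2, hD]
  field_simp
end

section
/- If c = a - i for some integer i with 0 ≤ i ≤ m-1, and a - b is not an integer, then the terminating balanced sum Σ_{k=0}^m (-1)^k binomial(m,k) (c+i)_k (b)_k / ((c)_k (1-m+i+b)_k) equals 0. -/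
open Polynomial Finset

-- step lemma for alternating sums
lemma alt_step (f : ℕ → ℂ) (m : ℕ) :
    ∑ k ∈ Finset.range (m + 2), (-1 : ℂ) ^ k * ((m + 1).choose k : ℂ) * f k
      = ∑ k ∈ Finset.range (m + 1), (-1 : ℂ) ^ k * (m.choose k : ℂ) * f k
        - ∑ k ∈ Finset.range (m + 1), (-1 : ℂ) ^ k * (m.choose k : ℂ) * f (k + 1) := by
  have h1 : ∑ k ∈ Finset.range (m + 2), (-1 : ℂ) ^ k * ((m + 1).choose k : ℂ) * f k
      = (∑ k ∈ Finset.range (m + 1),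
          ((-1 : ℂ) ^ (k+1) * (m.choose (k+1) : ℂ) * f (k+1)
            - (-1 : ℂ) ^ k * (m.choose k : ℂ) * f (k+1)))
        + (-1 : ℂ) ^ 0 * ((m + 1).choose 0 : ℂ) * f 0 := by
    rw [Finset.sum_range_succ' _ (m + 1)]
    congr 1
    refine Finset.sum_congr rfl fun k _ => ?_
    rw [Nat.choose_succ_succ]
    push_cast
    ring
  rw [Finset.sum_sub_distrib] at h1
  have h2 : ∑ k ∈ Finset.range (m + 1), (-1 : ℂ) ^ (k+1) * (m.choose (k+1) : ℂ) * f (k+1)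
      + (-1 : ℂ) ^ 0 * ((m + 1).choose 0 : ℂ) * f 0
      = ∑ k ∈ Finset.range (m + 2), (-1 : ℂ) ^ k * (m.choose k : ℂ) * f k := by
    rw [Finset.sum_range_succ' (fun k => (-1 : ℂ) ^ k * (m.choose k : ℂ) * f k) (m + 1)]
    simp
  have h3 : ∑ k ∈ Finset.range (m + 2), (-1 : ℂ) ^ k * (m.choose k : ℂ) * f k
      = ∑ k ∈ Finset.range (m + 1), (-1 : ℂ) ^ k * (m.choose k : ℂ) * f k := by
    rw [Finset.sum_range_succ]
    simp [Nat.choose_eq_zero_of_lt]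
  linear_combination h1 + h2 + h3

lemma alt_sum_poly : ∀ (m : ℕ) (p : Polynomial ℂ), p.degree < (m : ℕ) →
    ∑ k ∈ Finset.range (m + 1), (-1 : ℂ) ^ k * (m.choose k : ℂ) * p.eval (k : ℂ) = 0 := by
  intro m
  induction m with
  | zero =>
    intro p hp
    have : p = 0 := Polynomial.degree_eq_bot.mp (Nat.WithBot.lt_zero_iff.mp (by exact_mod_cast hp))
    simp [this]
  | succ m ih =>
    intro p hp
    set q : Polynomial ℂ := p.comp (X + C 1) - p with hq
    have hdeg : q.degree < (m : ℕ) := by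
      by_cases h0 : p = 0
      · rw [hq, h0]
        simp only [Polynomial.zero_comp, sub_zero, Polynomial.degree_zero]
        exact_mod_cast WithBot.bot_lt_coe m
      · have hXC : ((X + C 1 : ℂ[X])).natDegree ≠ 0 := by
          rw [Polynomial.natDegree_X_add_C]; exact one_ne_zero
        have hlc : (p.comp (X + C 1)).leadingCoeff = p.leadingCoeff := by
          rw [Polynomial.leadingCoeff_comp hXC, (Polynomial.monic_X_add_C (1 : ℂ)).leadingCoeff,
            one_pow, mul_one]
        have hcne : p.comp (X + C 1) ≠ 0 := by
          rw [← Polynomial.leadingCoeff_ne_zero, hlc, Polynomial.leadingCoeff_ne_zero]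
          exact h0
        have hcompdeg : (p.comp (X + C 1)).degree = p.degree := by
          have h1 : (p.comp (X + C 1)).natDegree = p.natDegree := by
            rw [Polynomial.natDegree_comp, Polynomial.natDegree_X_add_C, mul_one]
          rw [Polynomial.degree_eq_natDegree hcne, Polynomial.degree_eq_natDegree h0, h1]
        have hsub : q.degree < p.degree := by
          rw [hq]
          have := Polynomial.degree_sub_lt hcompdeg hcne hlc
          rwa [hcompdeg] at this
        have hple : p.degree ≤ (m : ℕ) := by
          rcases hd : p.degree with _ | n
          · exact bot_le
          · rw [hd] at hp
            have hn : n < m + 1 := WithBot.coe_lt_coe.mp hp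
            exact WithBot.coe_le_coe.mpr (Nat.lt_succ_iff.mp hn)
        exact lt_of_lt_of_le hsub hple
    have hqe : ∀ k : ℕ, q.eval (k : ℂ) = p.eval ((k : ℂ) + 1) - p.eval (k : ℂ) := by
      intro k
      simp [hq, Polynomial.eval_comp]
    have := ih q hdeg
    rw [alt_step (fun k => p.eval (k : ℂ)) m]
    have hsum : ∑ k ∈ Finset.range (m + 1), (-1 : ℂ) ^ k * (m.choose k : ℂ) * p.eval (k : ℂ)
        - ∑ k ∈ Finset.range (m + 1), (-1 : ℂ) ^ k * (m.choose k : ℂ) * p.eval ((k : ℂ) + 1)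
        = - ∑ k ∈ Finset.range (m + 1), (-1 : ℂ) ^ k * (m.choose k : ℂ) * q.eval (k : ℂ) := by
      rw [← Finset.sum_sub_distrib, ← Finset.sum_neg_distrib]
      refine Finset.sum_congr rfl fun k _ => ?_
      rw [hqe k]; ring
    have hcast : ∀ k : ℕ, p.eval (((k + 1 : ℕ) : ℂ)) = p.eval ((k : ℂ) + 1) := by
      intro k; push_cast; ring_nf
    calc ∑ k ∈ Finset.range (m + 1), (-1 : ℂ) ^ k * (m.choose k : ℂ) * p.eval (k : ℂ)
        - ∑ k ∈ Finset.range (m + 1), (-1 : ℂ) ^ k * (m.choose k : ℂ) * p.eval (((k + 1 : ℕ)) : ℂ)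
        = ∑ k ∈ Finset.range (m + 1), (-1 : ℂ) ^ k * (m.choose k : ℂ) * p.eval (k : ℂ)
        - ∑ k ∈ Finset.range (m + 1), (-1 : ℂ) ^ k * (m.choose k : ℂ) * p.eval ((k : ℂ) + 1) := by
          congr 1
          exact Finset.sum_congr rfl fun k _ => by rw [hcast k]
      _ = - ∑ k ∈ Finset.range (m + 1), (-1 : ℂ) ^ k * (m.choose k : ℂ) * q.eval (k : ℂ) := hsum
      _ = 0 := by rw [this]; ring

lemma rf_add_s7 (a : ℂ) (n k : ℕ) : rf a (n + k) = rf a n * rf (a + n) k := by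
  unfold rf
  rw [← ascPochhammer_mul]
  simp [Polynomial.eval_comp]

theorem balanced_sum_vanishes (m : ℕ) (hm : 0 < m) (i : ℕ) (hi : i < m) (b c : ℂ)
    (hab : ∀ n : ℤ, (c + i) - b ≠ (n : ℂ))
    (hc : ∀ k ≤ m, rf c k ≠ 0)
    (hd : ∀ k ≤ m, rf (1 - (m : ℂ) + i + b) k ≠ 0) :
    ∑ k ∈ Finset.range (m + 1),
        (-1 : ℂ) ^ k * (m.choose k : ℂ) * rf (c + i) k * rf b k /
          (rf c k * rf (1 - (m : ℂ) + i + b) k) = 0 := by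
  set dd : ℂ := 1 - (m : ℂ) + i + b with hdd
  set s : ℕ := m - 1 - i with hs
  have hs_le : s ≤ m := by omega
  have hsc : (s : ℂ) = (m : ℂ) - 1 - i := by
    rw [hs]
    have h1 : i ≤ m - 1 := by omega
    have h2 : 1 ≤ m := hm
    push_cast [Nat.cast_sub h1, Nat.cast_sub h2]
    ring
  have hb : b = dd + s := by rw [hsc, hdd]; ring
  have hci : rf c i ≠ 0 := hc i hi.le
  have hds : rf dd s ≠ 0 := hd s hs_le
  set P : Polynomial ℂ :=
    (ascPochhammer ℂ i).comp (C c + X) * (ascPochhammer ℂ s).comp (C dd + X) with hP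
  have hPeval : ∀ k : ℕ, P.eval (k : ℂ) = rf (c + k) i * rf (dd + k) s := by
    intro k
    simp [hP, rf, Polynomial.eval_comp]
  have hPdeg : P.degree < (m : ℕ) := by
    have h1 : P.natDegree ≤ i + s := by
      calc P.natDegree ≤ ((ascPochhammer ℂ i).comp (C c + X)).natDegree
            + ((ascPochhammer ℂ s).comp (C dd + X)).natDegree := Polynomial.natDegree_mul_le
        _ ≤ i + s := by
            rw [Polynomial.natDegree_comp, Polynomial.natDegree_comp, ascPochhammer_natDegree,
              ascPochhammer_natDegree, add_comm (C c) X, add_comm (C dd) X,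
              Polynomial.natDegree_X_add_C, Polynomial.natDegree_X_add_C, mul_one, mul_one]
    have h2 : i + s < m := by omega
    calc P.degree ≤ (P.natDegree : WithBot ℕ) := Polynomial.degree_le_natDegree
      _ ≤ ((i + s : ℕ) : WithBot ℕ) := WithBot.coe_le_coe.mpr h1
      _ < ((m : ℕ) : WithBot ℕ) := WithBot.coe_lt_coe.mpr h2
  have hterm : ∀ k ∈ Finset.range (m + 1),
      (-1 : ℂ) ^ k * (m.choose k : ℂ) * rf (c + i) k * rf b k / (rf c k * rf dd k)
        = (-1 : ℂ) ^ k * (m.choose k : ℂ) * P.eval (k : ℂ) / (rf c i * rf dd s) := by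
    intro k hk
    have hkm : k ≤ m := Nat.lt_succ_iff.mp (Finset.mem_range.mp hk)
    have hck : rf c k ≠ 0 := hc k hkm
    have hdk : rf dd k ≠ 0 := hd k hkm
    have e1 : rf c i * rf (c + i) k = rf c k * rf (c + k) i := by
      rw [← rf_add_s7, ← rf_add_s7, add_comm i k]
    have e2 : rf dd s * rf b k = rf dd k * rf (dd + k) s := by
      rw [hb, ← rf_add_s7, ← rf_add_s7, add_comm s k]
    rw [hPeval k, div_eq_div_iff (mul_ne_zero hck hdk) (mul_ne_zero hci hds)]
    linear_combination ((-1 : ℂ) ^ k * (m.choose k : ℂ) * rf dd s * rf b k) * e1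
      + ((-1 : ℂ) ^ k * (m.choose k : ℂ) * rf c k * rf (c + k) i) * e2
  rw [Finset.sum_congr rfl hterm]
  rw [← Finset.sum_div, alt_sum_poly m P hPdeg, zero_div]
end
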